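/- arXiv:1604.01588 — 6 statements merged into one kernel-verified Lean document; each statement's English description precedes it below -/
import Mathlib

section
/- Let n, m ≥ 1 be integers and let f : ℤ → ℤ be a nondecreasing map satisfying f(x+n) = f(x)+m for all x ∈ ℤ. (1) If a, b ∈ ℤ satisfy f(x+a) = f(x)+b for all x ∈ ℤ, then n·b = m·a. (2) Consequently, if a, k ∈ ℤ satisfy f(x+a) = f(x)+k·m for all x ∈ ℤ, then a = k·n. In particular, the actions of Aut([n]) ≅ ℤ/nℤ and of Aut([m]) ≅ ℤ/mℤ on the set of morphisms [n] → [m] of the cyclic category, given by pre- and post-composition with translations, are both free. -/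
theorem map_add_zsmul_of_map_add {G H : Type*} [AddGroup G] [AddGroup H] {f : G → H} {c : G}
    {d : H} (h : ∀ x, f (x + c) = f x + d) (t : ℤ) (x : G) :
    f (x + t • c) = f x + t • d := by
  induction t using Int.induction_on generalizing x with
  | zero => simp
  | succ k ih => rw [add_zsmul, one_zsmul, ← add_assoc, h, ih, add_zsmul, one_zsmul, add_assoc]
  | pred k ih =>
    have hsub : f (x + -(k : ℤ) • c - c) = f (x + -(k : ℤ) • c) - d := by
      rw [eq_sub_iff_add_eq, ← h, sub_add_cancel]
    rw [sub_zsmul, one_zsmul, ← sub_eq_add_neg, ← add_sub_assoc, hsub, ih, sub_zsmul, one_zsmul,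
      ← sub_eq_add_neg, add_sub_assoc]

/-- Translating by `n * a` in two ways: `a` times by `n`, or `n` times by `a`. -/
theorem Int.mul_eq_mul_of_map_add {f : ℤ → ℤ} {n m a b : ℤ} (hper : ∀ x, f (x + n) = f x + m)
    (hab : ∀ x, f (x + a) = f x + b) : n * b = m * a := by
  have hn := map_add_zsmul_of_map_add hper a 0
  have ha := map_add_zsmul_of_map_add hab n 0
  simp only [smul_eq_mul, zero_add] at hn ha
  rw [mul_comm a n, ha, add_right_inj] at hn
  linarith

theorem stmt_0_general (n m : ℤ) (hm : 1 ≤ m) (f : ℤ → ℤ)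
    (hper : ∀ x : ℤ, f (x + n) = f x + m) :
    (∀ a b : ℤ, (∀ x : ℤ, f (x + a) = f x + b) → n * b = m * a) ∧
    (∀ a k : ℤ, (∀ x : ℤ, f (x + a) = f x + k * m) → a = k * n) := by
  refine ⟨fun a b hab => Int.mul_eq_mul_of_map_add hper hab, fun a k hak => ?_⟩
  have h := Int.mul_eq_mul_of_map_add hper hak
  refine (mul_left_cancel₀ (show m ≠ 0 by omega) ?_).symm
  linarith

/-- The freeness part of Lemma `fp.le`: for a nondecreasing map `f : ℤ → ℤ` with
`f (x + n) = f x + m` (representing a morphism `[n] → [m]` of the cyclic category),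
any translation identity `f (x + a) = f x + b` forces `n * b = m * a`; in particular
`f (x + a) = f x + k * m` forces `a = k * n`, so the actions of `Aut([n])` and
`Aut([m])` on `Λ([n],[m])` are free. -/
theorem stmt_0 (n m : ℤ) (hn : 1 ≤ n) (hm : 1 ≤ m) (f : ℤ → ℤ)
    (hmono : Monotone f) (hper : ∀ x : ℤ, f (x + n) = f x + m) :
    (∀ a b : ℤ, (∀ x : ℤ, f (x + a) = f x + b) → n * b = m * a) ∧
    (∀ a k : ℤ, (∀ x : ℤ, f (x + a) = f x + k * m) → a = k * n) :=
  stmt_0_general n m hm f hper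
end

section
/- Let n, m ≥ 1 be integers and let f : ℤ → ℤ be a nondecreasing map satisfying f(x+n) = f(x)+m for all x ∈ ℤ. Set H = {a ∈ ℤ | there exists b ∈ ℤ with f(x+a) = f(x)+b for all x ∈ ℤ}. Then H is an additive subgroup of ℤ containing n, and there exists a positive integer l dividing both n and m such that H = (n/l)·ℤ and f(x + n/l) = f(x) + m/l for all x ∈ ℤ. (This identifies the stabilizer of the morphism represented by f under the Aut([n]) × Aut([m])-action with the cyclic group ℤ/lℤ, embedded by a ↦ (a·n/l mod n, a·m/l mod m), so that its order l divides both n and m.) -/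
private lemma iter_step (f : ℤ → ℤ) (d b : ℤ) (h : ∀ x : ℤ, f (x + d) = f x + b) :
    ∀ (k : ℕ) (x : ℤ), f (x + k * d) = f x + k * b := by
  intro k
  induction k with
  | zero => simp
  | succ k ih =>
    intro x
    have : (↑(k + 1) : ℤ) * d = k * d + d := by push_cast; ring
    rw [this, ← add_assoc, h, ih]
    push_cast; ring

/-- Stabilizer-structure part of Lemma `fp.le`: for a nondecreasing `f : ℤ → ℤ` with
`f (x + n) = f x + m`, the set `H` of integers `a` admitting some `b` with
`f (x + a) = f x + b` for all `x` is an additive subgroup of `ℤ` containing `n`,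
and there is a positive integer `l` dividing both `n` and `m` such that
`H = (n / l) ℤ` and `f (x + n / l) = f x + m / l` for all `x`. -/
theorem stmt_1 (n m : ℤ) (hn : 1 ≤ n) (hm : 1 ≤ m) (f : ℤ → ℤ)
    (hmono : Monotone f) (hper : ∀ x : ℤ, f (x + n) = f x + m) :
    n ∈ {a : ℤ | ∃ b : ℤ, ∀ x : ℤ, f (x + a) = f x + b} ∧
    (0 : ℤ) ∈ {a : ℤ | ∃ b : ℤ, ∀ x : ℤ, f (x + a) = f x + b} ∧
    (∀ a₁ a₂ : ℤ, (∃ b : ℤ, ∀ x : ℤ, f (x + a₁) = f x + b) →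
      (∃ b : ℤ, ∀ x : ℤ, f (x + a₂) = f x + b) →
      ∃ b : ℤ, ∀ x : ℤ, f (x + (a₁ + a₂)) = f x + b) ∧
    (∀ a : ℤ, (∃ b : ℤ, ∀ x : ℤ, f (x + a) = f x + b) →
      ∃ b : ℤ, ∀ x : ℤ, f (x + (-a)) = f x + b) ∧
    ∃ l : ℤ, 0 < l ∧ l ∣ n ∧ l ∣ m ∧
      {a : ℤ | ∃ b : ℤ, ∀ x : ℤ, f (x + a) = f x + b} = {a : ℤ | n / l ∣ a} ∧
      ∀ x : ℤ, f (x + n / l) = f x + m / l := by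
  have hmemn : n ∈ {a : ℤ | ∃ b : ℤ, ∀ x : ℤ, f (x + a) = f x + b} := ⟨m, hper⟩
  have hmem0 : (0 : ℤ) ∈ {a : ℤ | ∃ b : ℤ, ∀ x : ℤ, f (x + a) = f x + b} := ⟨0, by simp⟩
  have hadd : ∀ a₁ a₂ : ℤ, (∃ b : ℤ, ∀ x : ℤ, f (x + a₁) = f x + b) →
      (∃ b : ℤ, ∀ x : ℤ, f (x + a₂) = f x + b) →
      ∃ b : ℤ, ∀ x : ℤ, f (x + (a₁ + a₂)) = f x + b := by
    rintro a₁ a₂ ⟨b₁, h₁⟩ ⟨b₂, h₂⟩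
    exact ⟨b₂ + b₁, fun x => by
      have : x + (a₁ + a₂) = (x + a₂) + a₁ := by ring
      rw [this, h₁, h₂]; ring⟩
  have hneg : ∀ a : ℤ, (∃ b : ℤ, ∀ x : ℤ, f (x + a) = f x + b) →
      ∃ b : ℤ, ∀ x : ℤ, f (x + (-a)) = f x + b := by
    rintro a ⟨b, h⟩
    refine ⟨-b, fun x => ?_⟩
    have := h (x + -a)
    simp at this
    omega
  refine ⟨hmemn, hmem0, hadd, hneg, ?_⟩
  -- build the subgroup
  set H : AddSubgroup ℤ :=
    { carrier := {a : ℤ | ∃ b : ℤ, ∀ x : ℤ, f (x + a) = f x + b}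
      zero_mem' := hmem0
      add_mem' := fun {a₁ a₂} h₁ h₂ => hadd a₁ a₂ h₁ h₂
      neg_mem' := fun {a} h => hneg a h } with hH
  obtain ⟨g, hg⟩ := Int.subgroup_cyclic H
  have hmemiff : ∀ a : ℤ, a ∈ H ↔ |g| ∣ a := by
    intro a
    rw [hg, AddSubgroup.mem_closure_singleton, abs_dvd]
    constructor
    · rintro ⟨k, rfl⟩; exact Dvd.intro_left k (by simp [zsmul_eq_mul])
    · rintro ⟨k, rfl⟩; exact ⟨k, by simp [zsmul_eq_mul, mul_comm]⟩
  have hnH : n ∈ H := hmemn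
  have hgn : |g| ∣ n := (hmemiff n).1 hnH
  have hg0 : g ≠ 0 := by
    rintro rfl
    simp at hgn
    omega
  set d : ℤ := |g| with hd
  have hdpos : 0 < d := abs_pos.2 hg0
  have hdH : d ∈ H := (hmemiff d).2 dvd_rfl
  obtain ⟨b, hb⟩ := hdH
  obtain ⟨l, hl⟩ := hgn
  have hlpos : 0 < l := by
    by_contra h
    push_neg at h
    nlinarith
  -- l * b = m
  have hkey : ∀ x : ℤ, f (x + l * d) = f x + l * b := by
    intro x
    have := iter_step f d b hb l.toNat x
    rwa [Int.toNat_of_nonneg hlpos.le] at this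
  have hml : m = l * b := by
    have h1 := hkey 0
    have h2 := hper 0
    rw [show l * d = n from (mul_comm l d).trans hl.symm] at h1
    omega
  refine ⟨l, hlpos, ⟨d, hl.trans (mul_comm d l)⟩, ⟨b, hml⟩, ?_, ?_⟩
  · have hnl : n / l = d := by
      rw [show n = l * d from hl.trans (mul_comm d l), Int.mul_ediv_cancel_left _ hlpos.ne']
    ext a
    rw [hnl]
    exact hmemiff a
  · have hnl : n / l = d := by
      rw [show n = l * d from hl.trans (mul_comm d l), Int.mul_ediv_cancel_left _ hlpos.ne']
    have hml' : m / l = b := by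
      rw [hml, Int.mul_ediv_cancel_left _ hlpos.ne']
    rw [hnl, hml']
    exact hb
end

section
/- Let n, m, l ≥ 1 be integers with l dividing both n and m, and let g : ℤ → ℤ be a nondecreasing map satisfying g(x+n) = g(x)+m for all x ∈ ℤ. If there exists k ∈ ℤ such that g(x + n/l) = g(x) + m/l + k·m for all x ∈ ℤ, then k = 0; that is, g(x + n/l) = g(x) + m/l for all x. Consequently, the morphism class of g in Λ([n],[m]) is fixed by the order-l subgroup of Aut([n]) × Aut([m]) generated by (n/l mod n, m/l mod m) if and only if g itself is (n/l, m/l)-equivariant, i.e. the fixed-point set of this subgroup is exactly the image of the set Λ_l([n/l],[m/l]) of l-fold equivariant morphisms. -/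
/-- Fixed-points part of Lemma `fp.le`: for a nondecreasing `g : ℤ → ℤ` with
`g (x + n) = g x + m` and `l ∣ n`, `l ∣ m`, if `g (x + n/l) = g x + m/l + k * m`
for some `k` and all `x`, then `k = 0`; equivalently, the class of `g` is fixed by
the order-`l` subgroup generated by `(n/l, m/l)` iff `g` itself is
`(n/l, m/l)`-equivariant. -/
theorem stmt_2 (n m l : ℤ) (hn : 1 ≤ n) (hm : 1 ≤ m) (hl : 1 ≤ l)
    (hln : l ∣ n) (hlm : l ∣ m) (g : ℤ → ℤ) (hmono : Monotone g)
    (hper : ∀ x : ℤ, g (x + n) = g x + m) :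
    (∀ k : ℤ, (∀ x : ℤ, g (x + n / l) = g x + m / l + k * m) →
      k = 0 ∧ ∀ x : ℤ, g (x + n / l) = g x + m / l) ∧
    ((∃ k : ℤ, ∀ x : ℤ, g (x + n / l) = g x + m / l + k * m) ↔
      ∀ x : ℤ, g (x + n / l) = g x + m / l) := by
  have hl0 : l ≠ 0 := by omega
  have key : ∀ k : ℤ, (∀ x : ℤ, g (x + n / l) = g x + m / l + k * m) → k = 0 := by
    intro k hk
    have iter : ∀ j : ℕ, ∀ x : ℤ, g (x + j * (n / l)) = g x + j * (m / l + k * m) := by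
      intro j
      induction j with
      | zero => simp
      | succ j ih =>
        intro x
        have := hk (x + j * (n / l))
        push_cast
        rw [show x + (j + 1 : ℤ) * (n / l) = x + j * (n / l) + n / l by ring, this, ih x]
        ring
    have hln' : l * (n / l) = n := by rw [mul_comm, Int.ediv_mul_cancel hln]
    have hlm' : l * (m / l) = m := by rw [mul_comm, Int.ediv_mul_cancel hlm]
    have h := iter l.toNat 0
    rw [show ((l.toNat : ℤ)) = l by omega] at h
    rw [hln', hper 0] at h
    have : m = l * (m / l + k * m) := by omega
    rw [mul_add, hlm'] at this
    have : l * (k * m) = 0 := by omega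
    have := mul_eq_zero.mp this
    rcases this with h1 | h1
    · omega
    · rcases mul_eq_zero.mp h1 with h2 | h2 <;> omega
  constructor
  · intro k hk
    have hk0 := key k hk
    subst hk0
    exact ⟨rfl, fun x => by simpa using hk x⟩
  · constructor
    · rintro ⟨k, hk⟩
      have hk0 := key k hk
      subst hk0
      exact fun x => by simpa using hk x
    · intro h
      exact ⟨0, fun x => by simpa using h x⟩
end

section
/- Let n, m ≥ 1 and let f : ℤ → ℤ be a nondecreasing map satisfying f(x+n) = f(x)+m for all x ∈ ℤ. Define additive maps g_!, g_* : ℤ[ℤ/nℤ] → ℤ[ℤ/mℤ] on basis elements by g_!([y]) = [f(ỹ) mod m] and g_*([y]) = Σ_{z = f(ỹ)}^{f(ỹ+1)−1} [z mod m], where ỹ ∈ ℤ is any lift of y ∈ ℤ/nℤ (both maps are independent of the choice of lift, and unchanged if f is replaced by f + m). Then b_m ∘ g_* = g_! ∘ b_n, where for k ≥ 1, b_k : ℤ[ℤ/kℤ] → ℤ[ℤ/kℤ] is the additive map with b_k([y]) = [y] − [y+1]. -/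
/-!
Both sides are additive, so it suffices to compare them on a basis element `[y]` with lift
`ỹ = y.val`. There `b_m` telescopes the sum defining `g_* [y]` to `[f ỹ] - [f (ỹ + 1)]`, which is
`g_! ([y] - [y + 1])` because `f (ỹ + 1) ≡ f (lift of y + 1) mod m`: the two arguments differ by a
multiple of `n`, and `f (x + c n) = f x + c m`.
-/

/-- The additive map `b_k : ℤ[ℤ/kℤ] → ℤ[ℤ/kℤ]` determined by `b_k [y] = [y] - [y+1]`. -/
noncomputable def cyclicB (k : ℕ) : (ZMod k →₀ ℤ) → (ZMod k →₀ ℤ) :=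
  fun v => v - Finsupp.mapDomain (fun y => y + 1) v

open Finset AddConstMap AddConstMapClass

noncomputable def cyclicBHom (k : ℕ) : (ZMod k →₀ ℤ) →+ (ZMod k →₀ ℤ) :=
  AddMonoidHom.id _ - Finsupp.mapDomain.addMonoidHom (fun y : ZMod k => y + 1)

theorem coe_cyclicBHom (k : ℕ) : ⇑(cyclicBHom k) = cyclicB k := rfl

theorem cyclicB_single_one (k : ℕ) (y : ZMod k) :
    cyclicB k (Finsupp.single y 1) = Finsupp.single y 1 - Finsupp.single (y + 1) 1 := by
  simp [cyclicB, Finsupp.mapDomain_single]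

theorem Finset.sum_Ico_int_sub_succ {M : Type*} [AddCommGroup M] (g : ℤ → M) {a b : ℤ}
    (hab : a ≤ b) : ∑ z ∈ Ico a b, (g z - g (z + 1)) = g a - g b := by
  induction b, hab using Int.leInduction with
  | base => simp
  | succ b hab ih =>
    rw [Ico_add_one_right_eq_Icc, ← Ico_insert_right hab, sum_insert right_notMem_Ico, ih]
    abel

theorem cyclicB_sum_Ico (k : ℕ) {a b : ℤ} (hab : a ≤ b) :
    cyclicB k (∑ z ∈ Ico a b, Finsupp.single (z : ZMod k) 1) =
      Finsupp.single (a : ZMod k) 1 - Finsupp.single (b : ZMod k) 1 := by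
  rw [← coe_cyclicBHom, map_sum, coe_cyclicBHom]
  simpa [cyclicB_single_one] using
    sum_Ico_int_sub_succ (fun z : ℤ => Finsupp.single (z : ZMod k) (1 : ℤ)) hab

theorem intCast_map_eq_of_intCast_eq {n m : ℕ} (f : ℤ →+c[(n : ℤ), (m : ℤ)] ℤ) {a b : ℤ}
    (h : (a : ZMod n) = b) : (f a : ZMod m) = f b := by
  obtain ⟨c, rfl⟩ : ∃ c : ℤ, a = b + c • (n : ℤ) := by
    obtain ⟨c, hc⟩ := (ZMod.intCast_eq_intCast_iff_dvd_sub b a n).mp h.symm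
    exact ⟨c, by rw [smul_eq_mul]; linarith⟩
  rw [map_add_zsmul]
  simp

theorem stmt_4_general (n m : ℕ) (hn : 0 < n) (f : ℤ → ℤ)
    (hmono : Monotone f) (hper : ∀ x : ℤ, f (x + (n : ℤ)) = f x + (m : ℤ))
    (G₁ G₂ : (ZMod n →₀ ℤ) →+ (ZMod m →₀ ℤ))
    (hG₁ : ∀ y : ZMod n, G₁ (Finsupp.single y 1) =
      Finsupp.single ((f (y.val : ℤ) : ZMod m)) 1)
    (hG₂ : ∀ y : ZMod n, G₂ (Finsupp.single y 1) =
      ∑ z ∈ Finset.Ico (f (y.val : ℤ)) (f ((y.val : ℤ) + 1)),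
        Finsupp.single ((z : ZMod m)) 1) :
    ∀ v : ZMod n →₀ ℤ, cyclicB m (G₂ v) = G₁ (cyclicB n v) := by
  have : NeZero n := ⟨hn.ne'⟩
  have hf_succ (y : ZMod n) : (f ((y.val : ℤ) + 1) : ZMod m) = f ((y + 1).val : ℤ) :=
    intCast_map_eq_of_intCast_eq ⟨f, hper⟩ (by simp)
  suffices (cyclicBHom m).comp G₂ = G₁.comp (cyclicBHom n) from
    fun v => congr($this v)
  refine Finsupp.addHom_ext' fun y => AddMonoidHom.ext_int ?_
  simp only [AddMonoidHom.comp_apply, Finsupp.singleAddHom_apply, coe_cyclicBHom]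
  rw [hG₂, cyclicB_sum_Ico m (hmono (by omega)), cyclicB_single_one, map_sub, hG₁, hG₁,
    hf_succ]

/-- Functoriality statement in Lemma `4-le`: for a morphism of `Λ` represented by a
nondecreasing `f : ℤ → ℤ` with `f (x + n) = f x + m`, the induced maps
`g_! [y] = [f ỹ]` and `g_* [y] = Σ_{z = f ỹ}^{f (ỹ+1) - 1} [z]` on the free abelian
groups `ℤ[ℤ/nℤ] → ℤ[ℤ/mℤ]` satisfy `b_m ∘ g_* = g_! ∘ b_n`. -/
theorem stmt_4 (n m : ℕ) (hn : 0 < n) (hm : 0 < m) (f : ℤ → ℤ)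
    (hmono : Monotone f) (hper : ∀ x : ℤ, f (x + (n : ℤ)) = f x + (m : ℤ))
    (G₁ G₂ : (ZMod n →₀ ℤ) →+ (ZMod m →₀ ℤ))
    (hG₁ : ∀ y : ZMod n, G₁ (Finsupp.single y 1) =
      Finsupp.single ((f (y.val : ℤ) : ZMod m)) 1)
    (hG₂ : ∀ y : ZMod n, G₂ (Finsupp.single y 1) =
      ∑ z ∈ Finset.Ico (f (y.val : ℤ)) (f ((y.val : ℤ) + 1)),
        Finsupp.single ((z : ZMod m)) 1) :
    ∀ v : ZMod n →₀ ℤ, cyclicB m (G₂ v) = G₁ (cyclicB n v) :=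
  stmt_4_general n m hn f hmono hper G₁ G₂ hG₁ hG₂
end

section
/- Let n, m ≥ 1 and let f : ℤ → ℤ be a nondecreasing map satisfying f(x+n) = f(x)+m for all x ∈ ℤ. Define f_♯(y) as the least element of {x ∈ ℤ | y ≤ f(x)} and f^♯(y) as the greatest element of {x ∈ ℤ | f(x) ≤ y} (both sets are nonempty and bounded in the relevant direction). Then f_♯ and f^♯ are nondecreasing maps satisfying f_♯(y+m) = f_♯(y)+n and f^♯(y+m) = f^♯(y)+n for all y, and the two constructions are mutually inverse on such data: (f_♯)^♯ = f and (f^♯)_♯ = f. -/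
/-! Both hypotheses on `fs` and `fu` say exactly that `fs ⊣ f ⊣ fu` are Galois connections
(monotonicity of `f` supplies the missing half of each equivalence). Monotonicity of adjoints
and the extremal characterisations of `f` are then standard, and the periodicity transfers
because translations are order automorphisms: `fs (y + m) ≤ x ↔ y + m ≤ f x ↔ y ≤ f (x - n)
↔ fs y + n ≤ x`. -/

variable {α β : Type*}

theorem galoisConnection_of_isLeast [Preorder α] [Preorder β] {u : α → β} (hu : Monotone u)
    {l : β → α} (hl : ∀ y, IsLeast {x | y ≤ u x} (l y)) : GaloisConnection l u :=
  fun y _ => ⟨fun h => (hl y).1.trans (hu h), fun h => (hl y).2 h⟩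

theorem galoisConnection_of_isGreatest [Preorder α] [Preorder β] {l : α → β} (hl : Monotone l)
    {u : β → α} (hu : ∀ y, IsGreatest {x | l x ≤ y} (u y)) : GaloisConnection l u :=
  fun _ y => ⟨fun h => (hu y).2 h, fun h => (hl h).trans (hu y).1⟩

theorem map_sub_of_map_add [AddGroup α] [AddGroup β] {f : α → β} {a : α} {b : β}
    (hf : ∀ x, f (x + a) = f x + b) (x : α) : f (x - a) = f x - b :=
  eq_sub_of_add_eq (by rw [← hf, sub_add_cancel])

namespace GaloisConnection

variable [AddGroup α] [PartialOrder α] [AddRightMono α]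
  [AddGroup β] [PartialOrder β] [AddRightMono β]

theorem l_add_of_u_add {l : β → α} {u : α → β} (gc : GaloisConnection l u) {a : α} {b : β}
    (hu : ∀ x, u (x + a) = u x + b) (y : β) : l (y + b) = l y + a :=
  eq_of_forall_ge_iff fun x => by
    rw [gc.le_iff_le, ← le_sub_iff_add_le, ← map_sub_of_map_add hu, ← gc.le_iff_le,
      le_sub_iff_add_le]

theorem u_add_of_l_add {l : α → β} {u : β → α} (gc : GaloisConnection l u) {a : α} {b : β}
    (hl : ∀ x, l (x + a) = l x + b) (y : β) : u (y + b) = u y + a :=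
  eq_of_forall_le_iff fun x => by
    rw [← gc.le_iff_le, ← sub_le_iff_le_add, ← map_sub_of_map_add hl, gc.le_iff_le,
      sub_le_iff_le_add]

end GaloisConnection

theorem stmt_6_general (n m : ℤ) (f : ℤ → ℤ)
    (hmono : Monotone f) (hper : ∀ x : ℤ, f (x + n) = f x + m)
    (fs fu : ℤ → ℤ)
    (hfs : ∀ y : ℤ, IsLeast {x : ℤ | y ≤ f x} (fs y))
    (hfu : ∀ y : ℤ, IsGreatest {x : ℤ | f x ≤ y} (fu y)) :
    (∀ y : ℤ, ∃ z : ℤ, IsLeast {x : ℤ | y ≤ f x} z) ∧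
    (∀ y : ℤ, ∃ z : ℤ, IsGreatest {x : ℤ | f x ≤ y} z) ∧
    Monotone fs ∧ Monotone fu ∧
    (∀ y : ℤ, fs (y + m) = fs y + n) ∧
    (∀ y : ℤ, fu (y + m) = fu y + n) ∧
    (∀ x : ℤ, IsGreatest {y : ℤ | fs y ≤ x} (f x)) ∧
    (∀ x : ℤ, IsLeast {y : ℤ | x ≤ fu y} (f x)) := by
  have gc_fs : GaloisConnection fs f := galoisConnection_of_isLeast hmono hfs
  have gc_fu : GaloisConnection f fu := galoisConnection_of_isGreatest hmono hfu
  exact ⟨fun y => ⟨fs y, hfs y⟩, fun y => ⟨fu y, hfu y⟩, gc_fs.monotone_l, gc_fu.monotone_u,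
    gc_fs.l_add_of_u_add hper, gc_fu.u_add_of_l_add hper, fun _ => gc_fs.isGreatest_u,
    fun _ => gc_fu.isLeast_l⟩

/-- Self-duality `Λ ≅ Λᵒ`: for a nondecreasing `f : ℤ → ℤ` with `f (x + n) = f x + m`,
the adjoints `f_♯ y = min {x | y ≤ f x}` and `f^♯ y = max {x | f x ≤ y}` exist, are
nondecreasing with `f_♯ (y + m) = f_♯ y + n` and `f^♯ (y + m) = f^♯ y + n`, and the
two constructions are mutually inverse: `(f_♯)^♯ = f` and `(f^♯)_♯ = f`. -/
theorem stmt_6 (n m : ℤ) (hn : 1 ≤ n) (hm : 1 ≤ m) (f : ℤ → ℤ)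
    (hmono : Monotone f) (hper : ∀ x : ℤ, f (x + n) = f x + m)
    (fs fu : ℤ → ℤ)
    (hfs : ∀ y : ℤ, IsLeast {x : ℤ | y ≤ f x} (fs y))
    (hfu : ∀ y : ℤ, IsGreatest {x : ℤ | f x ≤ y} (fu y)) :
    (∀ y : ℤ, ∃ z : ℤ, IsLeast {x : ℤ | y ≤ f x} z) ∧
    (∀ y : ℤ, ∃ z : ℤ, IsGreatest {x : ℤ | f x ≤ y} z) ∧
    Monotone fs ∧ Monotone fu ∧
    (∀ y : ℤ, fs (y + m) = fs y + n) ∧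
    (∀ y : ℤ, fu (y + m) = fu y + n) ∧
    (∀ x : ℤ, IsGreatest {y : ℤ | fs y ≤ x} (f x)) ∧
    (∀ x : ℤ, IsLeast {y : ℤ | x ≤ fu y} (f x)) :=
  stmt_6_general n m f hmono hper fs fu hfs hfu
end

section
/- Let p be a prime. There exist elements c_i (for integers i ≥ 1) of the free associative unital ring ℤ⟨s₀,s₁⟩ on two noncommuting generators, with each c_i homogeneous of degree p^i (a ℤ-linear combination of words of length p^i in s₀ and s₁), such that for every associative unital ring A, all elements a₀, a₁ ∈ A, and every integer n ≥ 1, the element (a₀+a₁)^{p^n} − a₀^{p^n} − a₁^{p^n} − Σ_{i=1}^{n} p^i · c_i(a₀,a₁)^{p^{n−i}} lies in the additive subgroup [A,A] of A generated by all commutators ab − ba (here c_i(a₀,a₁) denotes the image of c_i under the ring homomorphism ℤ⟨s₀,s₁⟩ → A sending s₀ ↦ a₀, s₁ ↦ a₁). -/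
/-!
Call `χ : M → ℤ` a class function on a monoid if `χ (u * v) = χ (v * u)`, and let
`τ_χ x = ∑ₘ x m * χ m` be the induced trace on `ℤ[M]`. An element of `ℤ[M]` whose coefficient sums
over the classes of the relation `u * v ∼ v * u` all vanish is a sum of commutators, and these
coefficient sums are the traces `τ_χ` for the indicator functions of the classes.

The key congruence is `τ_χ (y ^ p ^ (m + 1)) ≡ τ_{χ ∘ (· ^ p)} (y ^ p ^ m) [ZMOD p ^ (m + 1)]`.
Expanding `y ^ p ^ (m + 1)` as a sum over tuples of monomials of `y`, the group `ℤ/p ^ (m + 1)`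
rotates the tuples without changing their contributions. Tuples that are not `p`-fold repetitions
have free orbits; on a repetition `u ^ p` the comparison comes down to
`a ^ p ^ (e + 1) ≡ a ^ p ^ e [ZMOD p ^ (e + 1)]` for the coefficient product `a`, applied by
induction on `m`.

Over `ℤ[FreeMonoid (Fin 2)] ≃ ℤ⟨s₀, s₁⟩` the `c n` are built recursively. If the defect at level
`n` is a sum of commutators, the congruence makes every class sum of the level-`n + 1` defect
without its last term divisible by `p ^ (n + 1)`; dividing by `p ^ (n + 1)` and lifting along
chosen class representatives gives `c (n + 1)`. Word length is a class function, so the lift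
stays homogeneous. Any ring receives the free algebra, and ring maps preserve sums of commutators.
-/

theorem AddAction.dvd_sum_of_card_stabilizer_mul_dvd {G X : Type*} [AddGroup G] [Fintype G]
    [AddAction G X] [Fintype X] {f : X → ℤ} (hf : ∀ (g : G) (x : X), f (g +ᵥ x) = f x)
    {d : ℤ} (hd : ∀ x, (Nat.card (stabilizer G x) : ℤ) * d ∣ f x) :
    (Nat.card G : ℤ) * d ∣ ∑ x, f x := by
  classical
  rw [← (selfEquivSigmaOrbits G X).symm.sum_comp, Fintype.sum_sigma]
  refine Finset.dvd_sum fun ω _ => ?_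
  have horbit (x : orbit G ω.out) : f ((selfEquivSigmaOrbits G X).symm ⟨ω, x⟩) = f ω.out := by
    obtain ⟨_, g, rfl⟩ := x
    exact hf g _
  rw [Fintype.sum_congr _ _ horbit, Finset.sum_const, nsmul_eq_mul, Finset.card_univ,
    Nat.card_eq_fintype_card, ← card_orbit_mul_card_stabilizer_eq_card_addGroup G ω.out,
    Nat.cast_mul, mul_assoc, ← Nat.card_eq_fintype_card (α := stabilizer G _)]
  exact mul_dvd_mul_left _ (hd _)

namespace Fin

lemma nsmul_ofNat (n k a : ℕ) [NeZero n] : k • Fin.ofNat n a = Fin.ofNat n (k * a) := by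
  induction k with
  | zero => ext; simp
  | succ k ih => rw [succ_nsmul, ih]; ext; simp [Fin.val_add, Nat.add_mod, add_mul]

theorem ofNat_pow_mem_of_card_ne_one {p m N : ℕ} (hp : p.Prime) (hN : N = p ^ (m + 1))
    [NeZero N] (H : AddSubgroup (Fin N)) (hH : Nat.card H ≠ 1) : Fin.ofNat N (p ^ m) ∈ H := by
  have hcard : Nat.card H * H.index = p ^ (m + 1) := by
    rw [H.card_mul_index, Nat.card_fin, hN]
  obtain ⟨i, hi, hindex⟩ := (Nat.dvd_prime_pow hp).mp (Dvd.intro_left _ hcard)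
  have him : i ≤ m := by
    refine Nat.le_of_lt_succ (lt_of_le_of_ne hi fun h => hH ?_)
    rw [hindex, h] at hcard
    exact (Nat.mul_eq_right (pow_ne_zero _ hp.ne_zero)).mp hcard
  have : p ^ m = H.index * p ^ (m - i) := by rw [hindex, ← pow_add, Nat.add_sub_cancel' him]
  rw [this, ← nsmul_ofNat]
  exact H.nsmul_index_mem _

variable {α : Type*}

lemma repeat_injective {q K : ℕ} (hq : 0 < q) :
    Function.Injective (Fin.repeat q : (Fin K → α) → Fin (q * K) → α) := by
  intro u v huv
  funext j
  have := congrFun huv (Fin.castLE (Nat.le_mul_of_pos_left K hq) j)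
  simpa [Fin.repeat_apply, Fin.modNat, Nat.mod_eq_of_lt j.isLt] using this

lemma mem_range_repeat_iff {q K : ℕ} [NeZero (q * K)] (t : Fin (q * K) → α) :
    t ∈ Set.range (Fin.repeat q) ↔ ∀ i, t (Fin.ofNat _ K + i) = t i := by
  constructor
  · rintro ⟨u, rfl⟩ i
    simp only [Fin.repeat_apply]
    congr 1
    ext
    simp [Fin.modNat, Fin.val_add, Nat.mod_mod_of_dvd _ (Dvd.intro_left q rfl), Nat.add_mod]
  · intro h
    have hq : 0 < q := Nat.pos_of_mul_pos_right (Nat.pos_of_ne_zero (NeZero.ne (q * K)))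
    have hmul (c : ℕ) : ∀ i, t (Fin.ofNat _ (c * K) + i) = t i := by
      induction c with
      | zero => simp
      | succ c ih =>
        intro i
        calc t (Fin.ofNat _ ((c + 1) * K) + i)
            = t (Fin.ofNat _ K + (Fin.ofNat _ (c * K) + i)) := by
              congr 1; ext; simp [Fin.val_add, add_mul, add_comm, add_left_comm]
          _ = t i := by rw [h, ih]
    refine ⟨fun j => t (Fin.castLE (Nat.le_mul_of_pos_left K hq) j), funext fun i => ?_⟩
    rw [Fin.repeat_apply, ← hmul (i / K)]
    congr 1
    ext
    simp only [Fin.val_add, Fin.val_ofNat, Fin.val_castLE, Fin.modNat, Nat.mod_add_mod,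
      Nat.div_add_mod', Nat.mod_eq_of_lt i.isLt]

end Fin

/-- A tuple outside the range of `Fin.repeat p` has trivial stabilizer under rotation, because
every nontrivial subgroup of `ℤ/p ^ (m + 1)` contains `p ^ m`; so its orbit contributes a multiple
of `p ^ (m + 1) * d`. -/
theorem dvd_sum_sub_sum_repeat {α : Type*} [Fintype α] {p m : ℕ} (hp : p.Prime)
    {f : (Fin (p * p ^ m) → α) → ℤ} (hf : ∀ j t, f (fun i => t (j + i)) = f t) {d : ℤ}
    (hd : ∀ t, d ∣ f t) : (p : ℤ) ^ (m + 1) * d ∣ ∑ t, f t - ∑ u, f (Fin.repeat p u) := by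
  classical
  have : NeZero (p * p ^ m) := ⟨(Nat.mul_pos hp.pos (pow_pos hp.pos m)).ne'⟩
  let : AddAction (Fin (p * p ^ m)) (Fin (p * p ^ m) → α) := arrowAddAction
  have hvadd (g : Fin (p * p ^ m)) (t : Fin (p * p ^ m) → α) : g +ᵥ t = fun i => t (-g + i) :=
    rfl
  set R := Set.range (Fin.repeat p : (Fin (p ^ m) → α) → _)
  have hrepeat : ∑ u, f (Fin.repeat p u) = ∑ t with t ∈ R, f t := by
    rw [← Finset.sum_image fun u _ v _ h => Fin.repeat_injective hp.pos h]
    congr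
    ext
    simp [R]
  rw [hrepeat, ← Finset.sum_filter_add_sum_filter_not Finset.univ (· ∈ R), add_sub_cancel_left,
    Finset.sum_filter, show (p : ℤ) ^ (m + 1) = Nat.card (Fin (p * p ^ m)) by simp [pow_succ']]
  refine AddAction.dvd_sum_of_card_stabilizer_mul_dvd (fun g t => ?_) fun t => ?_
  · have hR : g +ᵥ t ∈ R ↔ t ∈ R := by
      simp only [R, Fin.mem_range_repeat_iff, hvadd]
      refine ⟨fun h i => ?_, fun h i => by rw [add_left_comm, h]⟩
      have := h (g + i)
      rwa [add_left_comm, neg_add_cancel_left] at this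
    simp only [hR]
    rw [hvadd, hf]
  · by_cases ht : t ∈ R
    · simp [ht]
    have hstab : Nat.card (AddAction.stabilizer (Fin (p * p ^ m)) t) = 1 := by
      by_contra hc
      have hfix := (AddAction.stabilizer _ t).neg_mem
        (Fin.ofNat_pow_mem_of_card_ne_one hp (pow_succ' p m).symm _ hc)
      rw [AddAction.mem_stabilizer_iff, hvadd, neg_neg] at hfix
      exact ht ((Fin.mem_range_repeat_iff t).mpr fun i => congrFun hfix i)
    rw [if_pos ht, hstab, Nat.cast_one, one_mul]
    exact hd t

lemma Int.prime_pow_succ_dvd_pow_sub_pow {p : ℕ} (hp : p.Prime) (a : ℤ) (e : ℕ) :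
    (p : ℤ) ^ (e + 1) ∣ a ^ p ^ (e + 1) - a ^ p ^ e := by
  simpa [← pow_mul, ← pow_succ'] using
    dvd_sub_pow_of_dvd_sub (Int.prime_dvd_pow_self_sub hp a) e

section ClassFunction

variable {M β : Type*} [Monoid M]

def IsClassFunction (f : M → β) : Prop := ∀ u v, f (u * v) = f (v * u)

def cyclicRel (M : Type*) [Mul M] (a b : M) : Prop := ∃ u v, a = u * v ∧ b = v * u

variable {f : M → β}

lemma IsClassFunction.comp_pow (hf : IsClassFunction f) (k : ℕ) :
    IsClassFunction fun m => f (m ^ k) := by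
  intro u v
  cases k with
  | zero => simp
  | succ k =>
    calc f ((u * v) ^ (k + 1)) = f (u * ((v * u) ^ k * v)) := by
          rw [pow_succ, ← mul_assoc, mul_pow_mul, mul_assoc]
      _ = f ((v * u) ^ (k + 1)) := by rw [hf, mul_assoc, ← pow_succ]

lemma IsClassFunction.prod_rotate (hf : IsClassFunction f) (l : List M) (n : ℕ) :
    f (l.rotate n).prod = f l.prod := by
  rw [List.rotate_eq_drop_append_take_mod, List.prod_append, hf, ← List.prod_append,
    List.take_append_drop]

lemma IsClassFunction.apply_out_mk (hf : IsClassFunction f) (m : M) :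
    f (Quot.mk (cyclicRel M) m).out = f m := by
  have h : ∀ a b, cyclicRel M a b → f a = f b := by
    rintro _ _ ⟨u, v, rfl, rfl⟩
    exact hf u v
  exact congrArg (Quot.lift f h) (Quot.out_eq (Quot.mk _ m))

open scoped Classical in
lemma isClassFunction_indicator (κ : Quot (cyclicRel M)) :
    IsClassFunction fun m => if Quot.mk (cyclicRel M) m = κ then (1 : ℤ) else 0 := by
  intro u v
  simp only [Quot.sound (r := cyclicRel M) ⟨u, v, rfl, rfl⟩]

lemma isClassFunction_length {X : Type*} : IsClassFunction (FreeMonoid.length (α := X)) :=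
  fun u v => by simp [add_comm]

end ClassFunction

section TupleSums

lemma List.ofFn_add_left {β : Type*} {N : ℕ} [NeZero N] (t : Fin N → β) (j : Fin N) :
    List.ofFn (fun i => t (j + i)) = (List.ofFn t).rotate j := by
  apply List.ext_getElem (by simp)
  intro n _ _
  simp only [List.getElem_ofFn, List.getElem_rotate, List.length_ofFn]
  congr 1
  ext
  simp [Fin.val_add, add_comm]

variable {M α : Type*} [Monoid M] {p : ℕ}

lemma List.prod_ofFn_repeat (q : ℕ) {K : ℕ} (u : Fin K → M) :
    (List.ofFn (Fin.repeat q u)).prod = (List.ofFn u).prod ^ q := by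
  rw [List.ofFn_fin_repeat, List.prod_flatten, List.map_replicate, List.prod_replicate]

lemma Fin.prod_comp_repeat (q : ℕ) {K : ℕ} (c : α → ℤ) (u : Fin K → α) :
    ∏ i, c (Fin.repeat q u i) = (∏ i, c (u i)) ^ q := by
  simp only [← List.prod_ofFn]
  exact List.prod_ofFn_repeat q fun i => c (u i)

variable [Fintype α]

theorem dvd_sum_sub_sum_repeat_of_isClassFunction (hp : p.Prime) (v : α → M) (c : α → ℤ)
    {χ : M → ℤ} (hχ : IsClassFunction χ) {g : ℤ → ℤ} {d : ℤ} (hd : ∀ z, d ∣ g z) (m : ℕ) :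
    (p : ℤ) ^ (m + 1) * d ∣
      ∑ t : Fin (p * p ^ m) → α, χ (List.ofFn fun i => v (t i)).prod * g (∏ i, c (t i)) -
        ∑ u : Fin (p ^ m) → α,
          χ ((List.ofFn fun i => v (u i)).prod ^ p) * g ((∏ i, c (u i)) ^ p) := by
  have : NeZero (p * p ^ m) := ⟨(Nat.mul_pos hp.pos (pow_pos hp.pos m)).ne'⟩
  convert dvd_sum_sub_sum_repeat hp
    (f := fun t => χ (List.ofFn fun i => v (t i)).prod * g (∏ i, c (t i)))
    (fun j t => ?_) (fun t => (hd _).mul_left _) using 3 with u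
  · rw [Fin.prod_comp_repeat]
    exact congrArg (fun x => χ x * _) (List.prod_ofFn_repeat p fun i => v (u i)).symm
  · dsimp only
    rw [List.ofFn_add_left (fun i => v (t i)), hχ.prod_rotate]
    congr 2
    exact Equiv.prod_comp (Equiv.addLeft j) fun i => c (t i)

theorem pow_dvd_sum_mul_pow_sub_pow (hp : p.Prime) (v : α → M) (c : α → ℤ) (m : ℕ) :
    ∀ (e : ℕ) {χ : M → ℤ}, IsClassFunction χ → ∀ {N : ℕ}, N = p ^ m →
      (p : ℤ) ^ (m + e + 1) ∣ ∑ t : Fin N → α, χ (List.ofFn fun i => v (t i)).prod *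
        ((∏ i, c (t i)) ^ p ^ (e + 1) - (∏ i, c (t i)) ^ p ^ e) := by
  induction m with
  | zero =>
    intro e χ _ N _
    rw [zero_add]
    exact Finset.dvd_sum fun t _ => (Int.prime_pow_succ_dvd_pow_sub_pow hp _ e).mul_left _
  | succ m ih =>
    intro e χ hχ N hN
    rw [pow_succ'] at hN
    subst hN
    have hrepeat := dvd_sum_sub_sum_repeat_of_isClassFunction hp v c hχ
      (fun z => Int.prime_pow_succ_dvd_pow_sub_pow hp z e) m
    have hsmaller := ih (e + 1) (hχ.comp_pow p) rfl
    simp only [← pow_mul, ← pow_succ' p e] at hrepeat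
    simp only [pow_succ' p (e + 1)] at hsmaller
    rw [← pow_add, show m + 1 + (e + 1) = m + 1 + e + 1 by ring] at hrepeat
    rw [show m + (e + 1) + 1 = m + 1 + e + 1 by ring] at hsmaller
    simpa using dvd_add hrepeat hsmaller

theorem pow_dvd_sum_sub_sum_pow (hp : p.Prime) (v : α → M) (c : α → ℤ) {χ : M → ℤ}
    (hχ : IsClassFunction χ) (m : ℕ) :
    (p : ℤ) ^ (m + 1) ∣
      ∑ t : Fin (p * p ^ m) → α, χ (List.ofFn fun i => v (t i)).prod * ∏ i, c (t i) -
        ∑ u : Fin (p ^ m) → α, χ ((List.ofFn fun i => v (u i)).prod ^ p) * ∏ i, c (u i) := by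
  have hrepeat := dvd_sum_sub_sum_repeat_of_isClassFunction hp v c hχ (g := id)
    (fun z => one_dvd z) m
  have hfermat := pow_dvd_sum_mul_pow_sub_pow hp v c m 0 (hχ.comp_pow p) rfl
  rw [mul_one] at hrepeat
  convert dvd_add hrepeat hfermat using 1
  · rfl
  · simp only [id, pow_zero, zero_add, pow_one, mul_sub, Finset.sum_sub_distrib]
    ring

end TupleSums

def addCommutators (A : Type*) [Ring A] : AddSubgroup A :=
  AddSubgroup.closure {x | ∃ a b : A, x = a * b - b * a}

lemma map_mem_addCommutators {A B : Type*} [Ring A] [Ring B] (f : A →+* B) {x : A}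
    (hx : x ∈ addCommutators A) : f x ∈ addCommutators B := by
  have : (addCommutators A).map f.toAddMonoidHom ≤ addCommutators B := by
    rw [addCommutators, AddMonoidHom.map_closure]
    refine AddSubgroup.closure_mono ?_
    rintro _ ⟨_, ⟨a, b, rfl⟩, rfl⟩
    exact ⟨f a, f b, by simp⟩
  exact this ⟨x, hx, rfl⟩

namespace MonoidAlgebra

variable {M : Type*}

noncomputable def classTrace (χ : M → ℤ) : MonoidAlgebra ℤ M →+ ℤ :=
  (Finsupp.linearCombination ℤ χ).toAddMonoidHom.comp coeffAddEquiv.toAddMonoidHom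

@[simp] lemma classTrace_single (χ : M → ℤ) (m : M) (k : ℤ) :
    classTrace χ (single m k) = k * χ m := by
  simp [classTrace, coeffAddEquiv]

variable [Monoid M]

lemma classTrace_mul_comm {χ : M → ℤ} (hχ : IsClassFunction χ) (a b : MonoidAlgebra ℤ M) :
    classTrace χ (a * b) = classTrace χ (b * a) := by
  induction a using MonoidAlgebra.induction_linear with
  | zero => simp
  | add a a' ha ha' => simp [add_mul, mul_add, ha, ha']
  | single u k =>
    induction b using MonoidAlgebra.induction_linear with
    | zero => simp
    | add b b' hb hb' => simp [add_mul, mul_add, hb, hb']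
    | single v l => simp [single_mul_single, hχ u v, mul_comm k l]

lemma classTrace_eq_zero_of_mem {χ : M → ℤ} (hχ : IsClassFunction χ) {x : MonoidAlgebra ℤ M}
    (hx : x ∈ addCommutators _) : classTrace χ x = 0 := by
  induction hx using AddSubgroup.closure_induction with
  | mem _ h =>
    obtain ⟨a, b, rfl⟩ := h
    rw [map_sub, classTrace_mul_comm hχ, sub_self]
  | zero => simp
  | add _ _ _ _ h₁ h₂ => simp [h₁, h₂]
  | neg _ _ h => simp [h]

lemma sum_single_pow {k α : Type*} [CommSemiring k] [Fintype α] (v : α → M) (c : α → k)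
    (N : ℕ) : (∑ a, single (v a) (c a)) ^ N =
      ∑ t : Fin N → α, single (List.ofFn fun i => v (t i)).prod (∏ i, c (t i)) := by
  induction N with
  | zero => simp [one_def]
  | succ N ih =>
    rw [pow_succ', ih, Finset.sum_mul_sum, ← (Fin.consEquiv fun _ => α).sum_comp,
      Fintype.sum_prod_type]
    simp [single_mul_single, Fin.prod_univ_succ, List.ofFn_succ]

lemma classTrace_pow (χ : M → ℤ) (y : MonoidAlgebra ℤ M) (N : ℕ) :
    classTrace χ (y ^ N) = ∑ t : Fin N → y.coeff.support,
      χ (List.ofFn fun i => (t i : M)).prod * ∏ i, y.coeff (t i) := by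
  conv_lhs => rw [← sum_coeff_single y, Finsupp.sum, ← Finset.sum_coe_sort]
  rw [sum_single_pow, map_sum]
  simp [mul_comm]

theorem pow_dvd_classTrace_pow_sub {p : ℕ} (hp : p.Prime) {χ : M → ℤ}
    (hχ : IsClassFunction χ) (y : MonoidAlgebra ℤ M) (m : ℕ) :
    (p : ℤ) ^ (m + 1) ∣
      classTrace χ (y ^ p ^ (m + 1)) - classTrace (fun x => χ (x ^ p)) (y ^ p ^ m) := by
  rw [pow_succ' p m, classTrace_pow, classTrace_pow]
  exact pow_dvd_sum_sub_sum_pow hp (fun a : y.coeff.support => (a : M)) (fun a => y.coeff a) hχ m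

noncomputable def classSum (x : MonoidAlgebra ℤ M) : Quot (cyclicRel M) →₀ ℤ :=
  Finsupp.mapDomain (Quot.mk _) x.coeff

noncomputable def ofClasses (z : Quot (cyclicRel M) →₀ ℤ) : MonoidAlgebra ℤ M :=
  ofCoeff (Finsupp.mapDomain Quot.out z)

open scoped Classical in
lemma classSum_apply (x : MonoidAlgebra ℤ M) (κ : Quot (cyclicRel M)) :
    classSum x κ = classTrace (fun m => if Quot.mk (cyclicRel M) m = κ then 1 else 0) x := by
  induction x using MonoidAlgebra.induction_linear with
  | zero => simp [classSum]
  | add x y hx hy => simp [classSum, Finsupp.mapDomain_add, ← hx, ← hy]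
  | single m k => simp [classSum, Finsupp.single_apply]

lemma sub_ofClasses_classSum_mem (x : MonoidAlgebra ℤ M) :
    x - ofClasses (classSum x) ∈ addCommutators _ := by
  have hclass (k : ℤ) : IsClassFunction fun m =>
      (QuotientAddGroup.mk (single m k) : MonoidAlgebra ℤ M ⧸ addCommutators _) := by
    intro u v
    refine QuotientAddGroup.eq_iff_sub_mem.mpr (AddSubgroup.subset_closure ?_)
    exact ⟨single u k, single v 1, by simp [single_mul_single]⟩
  induction x using MonoidAlgebra.induction_linear with
  | zero => simp [classSum, ofClasses]
  | add x y hx hy =>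
    convert add_mem hx hy using 1
    simp only [classSum, ofClasses, coeff_add, Finsupp.mapDomain_add, ofCoeff_add]
    abel
  | single m k =>
    simp only [classSum, ofClasses, coeff_single, Finsupp.mapDomain_single]
    exact QuotientAddGroup.eq_iff_sub_mem.mp ((hclass k).apply_out_mk m).symm

/-- The division `· / d` truncates; it is exact under the hypothesis of `sub_smul_divLift_mem`. -/
noncomputable def divLift (d : ℤ) (x : MonoidAlgebra ℤ M) : MonoidAlgebra ℤ M :=
  ofClasses ((classSum x).mapRange (· / d) (Int.zero_ediv d))

theorem sub_smul_divLift_mem {d : ℤ} {x : MonoidAlgebra ℤ M}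
    (hx : ∀ χ : M → ℤ, IsClassFunction χ → d ∣ classTrace χ x) :
    x - d • divLift d x ∈ addCommutators _ := by
  have : d • divLift d x = ofClasses (classSum x) := by
    rw [divLift, ofClasses, ofClasses, ← ofCoeff_smul, ← Finsupp.mapDomain_smul]
    congr 2
    ext κ
    rw [Finsupp.smul_apply, Finsupp.mapRange_apply, smul_eq_mul,
      Int.mul_ediv_cancel' ((classSum_apply x κ).symm ▸ hx _ (isClassFunction_indicator κ))]
  rw [this]
  exact sub_ofClasses_classSum_mem x

theorem apply_eq_of_mem_support_divLift {β : Type*} {f : M → β} (hf : IsClassFunction f)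
    {b : β} {x : MonoidAlgebra ℤ M} (hx : ∀ m ∈ x.coeff.support, f m = b) (d : ℤ) :
    ∀ m ∈ (divLift d x).coeff.support, f m = b := by
  classical
  intro m hm
  obtain ⟨κ, hκ, rfl⟩ := Finset.mem_image.mp (Finsupp.mapDomain_support hm)
  obtain ⟨m', hm', rfl⟩ :=
    Finset.mem_image.mp (Finsupp.mapDomain_support (Finsupp.support_mapRange hκ))
  rw [hf.apply_out_mk, hx m' hm']

end MonoidAlgebra

open MonoidAlgebra

section AddPowCorrection

variable {M : Type*} [Monoid M] (p : ℕ) (x₀ x₁ : MonoidAlgebra ℤ M)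

noncomputable def addPowDefect (c : ℕ → MonoidAlgebra ℤ M) (s : Finset ℕ) (n : ℕ) :
    MonoidAlgebra ℤ M :=
  (x₀ + x₁) ^ p ^ n - x₀ ^ p ^ n - x₁ ^ p ^ n - ∑ i ∈ s, ((p : ℤ) ^ i) • c i ^ p ^ (n - i)

/-- The guard `i < n` only serves the well-founded recursion; see `addPowCorrection_eq`. -/
noncomputable def addPowCorrection (n : ℕ) : MonoidAlgebra ℤ M :=
  divLift ((p : ℤ) ^ n) (addPowDefect p x₀ x₁
    (fun i => if i < n then addPowCorrection i else 0) (Finset.Ico 1 n) n)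

lemma addPowCorrection_eq (n : ℕ) :
    addPowCorrection p x₀ x₁ n = divLift ((p : ℤ) ^ n)
      (addPowDefect p x₀ x₁ (addPowCorrection p x₀ x₁) (Finset.Ico 1 n) n) := by
  rw [addPowCorrection, addPowDefect, addPowDefect]
  congr 2
  exact Finset.sum_congr rfl fun i hi => by rw [if_pos (Finset.mem_Ico.mp hi).2]

variable {p}

theorem pow_dvd_classTrace_addPowDefect_sub (hp : p.Prime) (c : ℕ → MonoidAlgebra ℤ M)
    {s : Finset ℕ} {n : ℕ} (hs : ∀ i ∈ s, i ≤ n) {χ : M → ℤ} (hχ : IsClassFunction χ) :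
    (p : ℤ) ^ (n + 1) ∣ classTrace χ (addPowDefect p x₀ x₁ c s (n + 1)) -
      classTrace (fun x => χ (x ^ p)) (addPowDefect p x₀ x₁ c s n) := by
  set χ' : M → ℤ := fun x => χ (x ^ p)
  have hpow (y : MonoidAlgebra ℤ M) := pow_dvd_classTrace_pow_sub hp hχ y n
  have hterm : ∀ i ∈ s, (p : ℤ) ^ (n + 1) ∣
      (p : ℤ) ^ i * (classTrace χ (c i ^ p ^ (n + 1 - i)) - classTrace χ' (c i ^ p ^ (n - i))) := by
    intro i hi
    have := mul_dvd_mul_left ((p : ℤ) ^ i) (pow_dvd_classTrace_pow_sub hp hχ (c i) (n - i))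
    rwa [← pow_add, show i + (n - i + 1) = n + 1 by have := hs i hi; omega,
      show n - i + 1 = n + 1 - i by have := hs i hi; omega] at this
  have hexpand : classTrace χ (addPowDefect p x₀ x₁ c s (n + 1)) -
      classTrace χ' (addPowDefect p x₀ x₁ c s n) =
      (classTrace χ ((x₀ + x₁) ^ p ^ (n + 1)) - classTrace χ' ((x₀ + x₁) ^ p ^ n)) -
      (classTrace χ (x₀ ^ p ^ (n + 1)) - classTrace χ' (x₀ ^ p ^ n)) -
      (classTrace χ (x₁ ^ p ^ (n + 1)) - classTrace χ' (x₁ ^ p ^ n)) -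
      ∑ i ∈ s, (p : ℤ) ^ i *
        (classTrace χ (c i ^ p ^ (n + 1 - i)) - classTrace χ' (c i ^ p ^ (n - i))) := by
    simp only [addPowDefect, map_sub, map_sum, map_zsmul, smul_eq_mul, mul_sub,
      Finset.sum_sub_distrib]
    ring
  rw [hexpand]
  exact dvd_sub (dvd_sub (dvd_sub (hpow _) (hpow _)) (hpow _)) (Finset.dvd_sum hterm)

theorem addPowDefect_addPowCorrection_mem (hp : p.Prime) (n : ℕ) :
    addPowDefect p x₀ x₁ (addPowCorrection p x₀ x₁) (Finset.Icc 1 n) n ∈ addCommutators _ := by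
  induction n with
  | zero => simp [addPowDefect, zero_mem]
  | succ n ih =>
    have hsplit : addPowDefect p x₀ x₁ (addPowCorrection p x₀ x₁) (Finset.Icc 1 (n + 1)) (n + 1)
        = addPowDefect p x₀ x₁ (addPowCorrection p x₀ x₁) (Finset.Ico 1 (n + 1)) (n + 1) -
          ((p : ℤ) ^ (n + 1)) • addPowCorrection p x₀ x₁ (n + 1) := by
      rw [addPowDefect, addPowDefect, Finset.sum_Icc_succ_top (by omega),
        Finset.Ico_add_one_right_eq_Icc, Nat.sub_self, pow_zero, pow_one, sub_add_eq_sub_sub]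
    rw [hsplit, addPowCorrection_eq]
    refine sub_smul_divLift_mem fun χ hχ => ?_
    have := pow_dvd_classTrace_addPowDefect_sub x₀ x₁ hp (addPowCorrection p x₀ x₁)
      (s := Finset.Icc 1 n) (fun i hi => (Finset.mem_Icc.mp hi).2) hχ
    rwa [classTrace_eq_zero_of_mem (hχ.comp_pow p) ih, sub_zero,
      ← Finset.Ico_add_one_right_eq_Icc] at this

end AddPowCorrection

section LengthGrade

variable (X : Type*)

def lengthGrade (L : ℕ) : Submodule ℤ (MonoidAlgebra ℤ (FreeMonoid X)) where
  carrier := {x | ∀ v ∈ x.coeff.support, v.length = L}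
  zero_mem' := by simp
  add_mem' {a b} ha hb v hv := by
    classical
    exact (Finset.mem_union.mp (Finsupp.support_add hv)).elim (ha v) (hb v)
  smul_mem' _ _ h v hv := h v (Finsupp.support_smul hv)

variable {X}

lemma single_mem_lengthGrade (v : FreeMonoid X) (k : ℤ) :
    single v k ∈ lengthGrade X v.length := by
  intro w hw
  rw [Finset.mem_singleton.mp (Finsupp.support_single_subset hw)]

lemma mul_mem_lengthGrade {x y : MonoidAlgebra ℤ (FreeMonoid X)} {L L' : ℕ}
    (hx : x ∈ lengthGrade X L) (hy : y ∈ lengthGrade X L') : x * y ∈ lengthGrade X (L + L') := by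
  classical
  intro w hw
  obtain ⟨a, ha, b, hb, rfl⟩ := Finset.mem_mul.mp (support_coeff_mul_subset x y hw)
  rw [FreeMonoid.length_mul, hx a ha, hy b hb]

lemma pow_mem_lengthGrade {x : MonoidAlgebra ℤ (FreeMonoid X)} {L : ℕ}
    (hx : x ∈ lengthGrade X L) (k : ℕ) : x ^ k ∈ lengthGrade X (k * L) := by
  induction k with
  | zero => simpa [one_def] using single_mem_lengthGrade (1 : FreeMonoid X) (1 : ℤ)
  | succ k ih => simpa [pow_succ, add_mul] using mul_mem_lengthGrade ih hx

theorem addPowCorrection_mem_lengthGrade (p : ℕ) {x₀ x₁ : MonoidAlgebra ℤ (FreeMonoid X)}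
    (h₀ : x₀ ∈ lengthGrade X 1) (h₁ : x₁ ∈ lengthGrade X 1) (n : ℕ) :
    addPowCorrection p x₀ x₁ n ∈ lengthGrade X (p ^ n) := by
  induction n using Nat.strong_induction_on with
  | _ n ih =>
    have hpow {y} (hy : y ∈ lengthGrade X 1) : y ^ p ^ n ∈ lengthGrade X (p ^ n) := by
      simpa using pow_mem_lengthGrade hy (p ^ n)
    rw [addPowCorrection_eq]
    refine apply_eq_of_mem_support_divLift isClassFunction_length
      (sub_mem (sub_mem (sub_mem (hpow (add_mem h₀ h₁)) (hpow h₀)) (hpow h₁))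
        (Submodule.sum_mem _ fun i hi => Submodule.smul_mem _ _ ?_)) _
    have hin := Finset.mem_Ico.mp hi
    simpa [← pow_add, Nat.sub_add_cancel hin.2.le] using
      pow_mem_lengthGrade (ih i hin.2) (p ^ (n - i))

lemma equivMonoidAlgebraFreeMonoid_symm_mem_span {x : MonoidAlgebra ℤ (FreeMonoid X)} {L : ℕ}
    (hx : x ∈ lengthGrade X L) :
    FreeAlgebra.equivMonoidAlgebraFreeMonoid.symm x ∈ Submodule.span ℤ
      {y | ∃ w : List X, w.length = L ∧ y = (w.map (FreeAlgebra.ι ℤ)).prod} := by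
  rw [← sum_coeff_single x, map_finsuppSum]
  refine Submodule.finsuppSum_mem _ _ _ _ fun v hv => ?_
  simp only [FreeAlgebra.equivMonoidAlgebraFreeMonoid, AlgEquiv.ofAlgHom_symm_apply, lift_single,
    FreeMonoid.lift_apply]
  exact Submodule.smul_mem _ _
    (Submodule.subset_span ⟨v.toList, hx v (Finsupp.mem_support_iff.mpr hv), rfl⟩)

end LengthGrade

/-- Lemma `c.i.le`: there are universal noncommutative polynomials `c i` in
`ℤ⟨s₀, s₁⟩`, homogeneous of degree `p ^ i`, such that in every associative unital
ring `A`, for all `a₀ a₁ : A` and `n ≥ 1`,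
`(a₀ + a₁)^{p^n} - a₀^{p^n} - a₁^{p^n} ≡ Σ_{i=1}^n p^i · c_i(a₀,a₁)^{p^{n-i}}`
modulo the additive subgroup `[A, A]` generated by commutators. -/
theorem stmt_8 (p : ℕ) (hp : p.Prime) :
    ∃ c : ℕ → FreeAlgebra ℤ (Fin 2),
      (∀ i : ℕ, 1 ≤ i → c i ∈ Submodule.span ℤ
        {x : FreeAlgebra ℤ (Fin 2) | ∃ w : List (Fin 2),
          w.length = p ^ i ∧ x = (w.map (FreeAlgebra.ι ℤ)).prod}) ∧
      ∀ (A : Type) [Ring A], ∀ a₀ a₁ : A, ∀ n : ℕ, 1 ≤ n →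
        (a₀ + a₁) ^ p ^ n - a₀ ^ p ^ n - a₁ ^ p ^ n
            - ∑ i ∈ Finset.Icc 1 n,
                ((p : ℤ) ^ i) • ((FreeAlgebra.lift ℤ ![a₀, a₁]) (c i)) ^ p ^ (n - i)
          ∈ AddSubgroup.closure {x : A | ∃ a b : A, x = a * b - b * a} := by
  let e := FreeAlgebra.equivMonoidAlgebraFreeMonoid (R := ℤ) (X := Fin 2)
  let s (j : Fin 2) : MonoidAlgebra ℤ (FreeMonoid (Fin 2)) := single (FreeMonoid.of j) 1
  refine ⟨fun i => e.symm (addPowCorrection p (s 0) (s 1) i), fun i _ => ?_,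
    fun A _ a₀ a₁ n _ => ?_⟩
  · exact equivMonoidAlgebraFreeMonoid_symm_mem_span (addPowCorrection_mem_lengthGrade p
      (single_mem_lengthGrade _ _) (single_mem_lengthGrade _ _) i)
  · let φ := ((FreeAlgebra.lift ℤ ![a₀, a₁]).comp e.symm.toAlgHom).toRingHom
    have hφ (j : Fin 2) : φ (s j) = ![a₀, a₁] j := by
      simp [φ, s, e, FreeAlgebra.equivMonoidAlgebraFreeMonoid]
    have := map_mem_addCommutators φ (addPowDefect_addPowCorrection_mem (s 0) (s 1) hp n)
    simp only [addPowDefect, map_sub, map_pow, map_add, map_sum, map_zsmul, hφ] at this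
    exact this
end
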